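/- (Eavesdropper decoding bound for high-rate codes.) Let n ≥ 1 and M ≥ 2. Consider any random encoding code with message set {1,…,M}, random encoders Φ(·|i) (probability distributions on {0,1}ⁿ) and decoding sets D₁,…,D_M that partition {0,1}ⁿ. Let 1 ≤ m < M, let g ∈ [0,1], and let the message distribution be P(i) = (1−g)/m for i ≤ m and P(i) = g/(M−m) for i > m. Let Θ ⊆ {0,1}ⁿ be any set with ⋃_{i=1}^m D_i ⊆ Θ. Then the average error of the eavesdropper who observes the output of V_Θ and decodes with the sets D_i satisfies 1 − Σ_{i=1}^M P(i)·Σ_x Φ(x|i)·V_Θ(D_i|x) ≤ ( 1 − Σ_{i=1}^M P(i)·Φ(D_i|i) ) + g, i.e., the eavesdropper's error probability is at most the legitimate receiver's average error probability over the noiseless main channel plus g. -/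
import Mathlib


open scoped BigOperators

noncomputable section

/-- A probability distribution on a finite type. -/
def IsProbDist {α : Type} [Fintype α] (p : α → ℝ) : Prop :=
  (∀ a, 0 ≤ p a) ∧ (∑ a, p a) = 1

/-- Output distribution of channel `V` under random encoder `Φ` on message `u`. -/
def Zout {U X Z : Type} [Fintype X] (Φ : U → X → ℝ) (V : X → Z → ℝ) (u : U) (z : Z) : ℝ :=
  ∑ x, Φ u x * V x z

/-- Probability that the decoder `ψ` fails on message `u`. -/
def errProb {U X Y : Type} [Fintype X] [Fintype Y] [DecidableEq U]
    (W : X → Y → ℝ) (Φ : U → X → ℝ) (ψ : Y → U) (u : U) : ℝ :=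
  ∑ y, (if ψ y ≠ u then Zout Φ W u y else 0)

/-- Shannon mutual information in bits (logarithm base 2) of the joint law `p u * q u z`. -/
def mutualInfo2 {U Z : Type} [Fintype U] [Fintype Z] (p : U → ℝ) (q : U → Z → ℝ) : ℝ :=
  ∑ u, ∑ z, p u * q u z * Real.logb 2 (q u z / (∑ v, p v * q v z))

/-- The channel `V_Θ` on `{0,1}ⁿ`: the identity channel on inputs in `Θ` and the completely
noisy (uniform-output) channel on inputs outside `Θ`. -/
def Vtheta (n : ℕ) (Θ : Finset (Fin n → Bool)) (x y : Fin n → Bool) : ℝ :=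
  if x ∈ Θ then (if y = x then 1 else 0) else ((2:ℝ) ^ n)⁻¹

/-- **Statement 17 (Eavesdropper decoding bound for high-rate codes).** For any random
encoding code with decoding sets `D₁,…,D_M` partitioning `{0,1}ⁿ`, the skewed message
distribution `P` (mass `(1−g)/m` on the first `m` messages, `g/(M−m)` on the rest), and any
`Θ` covering `D₁ ∪ … ∪ D_m`, the average error of the eavesdropper who observes the output
of `V_Θ` and decodes with the `D_i` is at most the legitimate receiver's average error over
the noiseless main channel plus `g`. -/
theorem eavesdropper_decoding_bound (n : ℕ) (hn : 1 ≤ n) (M : ℕ) (hM : 2 ≤ M)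
    (Φ : Fin M → (Fin n → Bool) → ℝ) (hΦ : ∀ i, IsProbDist (Φ i))
    (D : Fin M → Finset (Fin n → Bool))
    (hdisj : ∀ i j, i ≠ j → Disjoint (D i) (D j))
    (hcover : ∀ y, ∃ i, y ∈ D i)
    (m : ℕ) (hm1 : 1 ≤ m) (hmM : m < M)
    (g : ℝ) (hg : g ∈ Set.Icc (0:ℝ) 1)
    (Θ : Finset (Fin n → Bool)) (hΘ : ∀ i : Fin M, (i : ℕ) < m → D i ⊆ Θ)
    (P : Fin M → ℝ)
    (hP : ∀ i : Fin M, P i = if (i : ℕ) < m then (1 - g) / m else g / (M - m)) :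
    1 - ∑ i, P i * ∑ x, Φ i x * (∑ y ∈ D i, Vtheta n Θ x y)
      ≤ (1 - ∑ i, P i * (∑ x ∈ D i, Φ i x)) + g := by
  obtain ⟨hg0, hg1⟩ := hg
  have hMm : (0:ℝ) < (M:ℝ) - m := by
    have : (m:ℝ) < M := by exact_mod_cast hmM
    linarith
  set E : Fin M → ℝ := fun i => ∑ x, Φ i x * (∑ y ∈ D i, Vtheta n Θ x y) with hE
  set C : Fin M → ℝ := fun i => ∑ x ∈ D i, Φ i x with hC
  have hPnn : ∀ i, 0 ≤ P i := by
    intro i; rw [hP]; split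
    · exact div_nonneg (by linarith) (by positivity)
    · exact div_nonneg hg0 (le_of_lt hMm)
  have hΦnn : ∀ i x, 0 ≤ Φ i x := fun i => (hΦ i).1
  have hVnn : ∀ x y, 0 ≤ Vtheta n Θ x y := by
    intro x y; unfold Vtheta; split
    · split <;> norm_num
    · positivity
  have hE0 : ∀ i, 0 ≤ E i := by
    intro i
    apply Finset.sum_nonneg; intro x _
    exact mul_nonneg (hΦnn i x) (Finset.sum_nonneg fun y _ => hVnn x y)
  have hC1 : ∀ i, C i ≤ 1 := by
    intro i
    calc C i ≤ ∑ x, Φ i x :=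
          Finset.sum_le_sum_of_subset_of_nonneg (Finset.subset_univ _)
            (fun x _ _ => hΦnn i x)
      _ = 1 := (hΦ i).2
  have hEC : ∀ i : Fin M, (i : ℕ) < m → C i ≤ E i := by
    intro i hi
    have hsub := hΘ i hi
    have hrw : C i = ∑ x, Φ i x * (if x ∈ D i then 1 else 0) := by
      simp [hC, Finset.sum_ite_mem, mul_ite]
    rw [hrw]
    apply Finset.sum_le_sum
    intro x _
    by_cases hxΘ : x ∈ Θ
    · have : (∑ y ∈ D i, Vtheta n Θ x y) = (if x ∈ D i then 1 else 0) := by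
        simp only [Vtheta, hxΘ, if_true]
        rw [Finset.sum_ite_eq' (D i) x (fun _ => (1:ℝ))]
      rw [this]
    · have hxD : x ∉ D i := fun hx => hxΘ (hsub hx)
      simp only [hxD, if_false, mul_zero]
      exact mul_nonneg (hΦnn i x) (Finset.sum_nonneg fun y _ => hVnn x y)
  set S : Finset (Fin M) := Finset.univ.filter (fun i : Fin M => (i:ℕ) < m) with hS
  have hSc : (Finset.univ.filter (fun i : Fin M => ¬ ((i:ℕ) < m))).card = M - m := by
    rw [Finset.filter_not, Finset.card_sdiff_of_subset (Finset.filter_subset _ _)]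
    have : (Finset.univ.filter (fun i : Fin M => ((i:ℕ) < m))) =
        (Finset.range m).attachFin
          (fun x hx => lt_of_lt_of_le (Finset.mem_range.mp hx) hmM.le) := by
      ext i; simp [Finset.mem_attachFin]
    rw [this, Finset.card_attachFin, Finset.card_range, Finset.card_univ, Fintype.card_fin]
  -- sum of P over complement equals g
  have hPtail : ∑ i ∈ Finset.univ.filter (fun i : Fin M => ¬ ((i:ℕ) < m)), P i = g := by
    have : ∀ i ∈ Finset.univ.filter (fun i : Fin M => ¬ ((i:ℕ) < m)),
        P i = g / ((M:ℝ) - m) := by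
      intro i hi
      rw [hP]
      rw [Finset.mem_filter] at hi
      simp [hi.2]
    rw [Finset.sum_congr rfl this, Finset.sum_const, hSc, nsmul_eq_mul]
    have hcast : ((M - m : ℕ) : ℝ) = (M:ℝ) - m := by
      rw [Nat.cast_sub hmM.le]
    rw [hcast]
    field_simp
  have key1 : ∑ i ∈ S, P i * C i ≤ ∑ i, P i * E i := by
    calc ∑ i ∈ S, P i * C i ≤ ∑ i ∈ S, P i * E i := by
          apply Finset.sum_le_sum
          intro i hi
          rw [hS, Finset.mem_filter] at hi
          exact mul_le_mul_of_nonneg_left (hEC i hi.2) (hPnn i)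
      _ ≤ ∑ i, P i * E i := by
          apply Finset.sum_le_sum_of_subset_of_nonneg (Finset.subset_univ _)
          intro i _ _
          exact mul_nonneg (hPnn i) (hE0 i)
  have key2 : ∑ i, P i * C i ≤ ∑ i ∈ S, P i * C i + g := by
    rw [← Finset.sum_filter_add_sum_filter_not Finset.univ (fun i : Fin M => (i:ℕ) < m)
      (fun i => P i * C i)]
    have : ∑ i ∈ Finset.univ.filter (fun i : Fin M => ¬ ((i:ℕ) < m)), P i * C i ≤ g := by
      calc ∑ i ∈ Finset.univ.filter (fun i : Fin M => ¬ ((i:ℕ) < m)), P i * C i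
          ≤ ∑ i ∈ Finset.univ.filter (fun i : Fin M => ¬ ((i:ℕ) < m)), P i := by
            apply Finset.sum_le_sum
            intro i _
            calc P i * C i ≤ P i * 1 :=
                  mul_le_mul_of_nonneg_left (hC1 i) (hPnn i)
              _ = P i := mul_one _
        _ = g := hPtail
    linarith
  linarith

end
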